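/- arXiv:1405.7011 — 3 statements merged into one kernel-verified Lean document; each statement's English description precedes it below -/
import Mathlib

section
/- Let G be a simple graph on n vertices, let UB be an upper bound of χ_eq(G), and let Π = (C_1, ..., C_k; U) be a partial k-coloring of G with k < UB, and set M = max{|C_r| : 1 ≤ r ≤ k}. If Π can be extended to an r-eqcol of G for some r with k ≤ r < UB, then |U| ≥ Σ_{j=1}^{k} (max{M − 1, ⌊n/(UB − 1)⌋} − |C_j|)^+ (property P.1). -/
/-- `C₁, …, C_k` is a partial `k`-coloring of `G`: the classes are nonempty,
pairwise disjoint independent (stable) sets of vertices. -/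
def IsPartialColoring {V : Type*} (G : SimpleGraph V) {k : ℕ}
    (C : Fin k → Finset V) : Prop :=
  (∀ j, (C j).Nonempty) ∧
  (∀ j, ∀ u ∈ C j, ∀ v ∈ C j, ¬ G.Adj u v) ∧
  (∀ i j, i ≠ j → Disjoint (C i) (C j))

/-- `C₁, …, C_k` is an equitable `k`-coloring (`k`-eqcol) of `G`: a partition of the
vertex set into `k` nonempty independent sets whose sizes pairwise differ by at most one. -/
def IsEqCol {V : Type*} [Fintype V] [DecidableEq V] (G : SimpleGraph V) {k : ℕ}
    (C : Fin k → Finset V) : Prop :=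
  IsPartialColoring G C ∧
  Finset.univ.biUnion C = Finset.univ ∧
  ∀ i j, |((C i).card : ℤ) - ((C j).card : ℤ)| ≤ 1

/-- The equitable chromatic number `χ_eq(G)`: the least `k` such that `G` admits
an equitable `k`-coloring. -/
noncomputable def eqChrom {V : Type*} [Fintype V] [DecidableEq V] (G : SimpleGraph V) : ℕ :=
  sInf {k : ℕ | ∃ C : Fin k → Finset V, IsEqCol G C}

/-- **Property P.1.**  If a partial `k`-coloring `Π = (C₁,…,C_k; U)` of `G`
(with `k < UB`, `UB` an upper bound of `χ_eq(G)`, `M` the largest class size) can be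
extended to an `r`-eqcol of `G` with `k ≤ r < UB`, then
`|U| ≥ Σ_{j=1}^{k} (max{M − 1, ⌊n/(UB − 1)⌋} − |C_j|)⁺`. -/
theorem property_P1 {V : Type*} [Fintype V] [DecidableEq V] (G : SimpleGraph V)
    (n UB k : ℕ) (hn : n = Fintype.card V)
    (hUB : eqChrom G ≤ UB)
    (C : Fin k → Finset V) (hC : IsPartialColoring G C)
    (hk : 0 < k) (hkUB : k < UB)
    (M : ℕ) (hM : M = Finset.univ.sup fun j => (C j).card)
    (U : Finset V) (hU : U = Finset.univ \ Finset.univ.biUnion C)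
    (r : ℕ) (hkr : k ≤ r) (hrUB : r < UB)
    (C' : Fin r → Finset V) (hC' : IsEqCol G C')
    (hext : ∀ j : Fin k, C j ⊆ C' (Fin.castLE hkr j)) :
    (U.card : ℤ) ≥ ∑ j : Fin k, max (max ((M : ℤ) - 1) ((n / (UB - 1) : ℕ) : ℤ)
      - ((C j).card : ℤ)) 0 := by

  classical
  haveI : Nonempty (Fin k) := ⟨⟨0, hk⟩⟩
  obtain ⟨hCne, hCind, hCdisj⟩ := hC
  obtain ⟨⟨hC'ne, hC'ind, hC'disj⟩, hC'cov, hC'eq⟩ := hC'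
  have hr : 0 < r := lt_of_lt_of_le hk hkr
  have hsum : ∑ i, (C' i).card = n := by
    rw [hn, ← Finset.card_univ, ← hC'cov]
    exact (Finset.card_biUnion (fun i _ j _ hij => hC'disj i j hij)).symm
  -- lower bound on each class of C'
  have hlow : ∀ i : Fin r,
      max ((M : ℤ) - 1) ((n / (UB - 1) : ℕ) : ℤ) ≤ ((C' i).card : ℤ) := by
    intro i
    apply max_le
    · obtain ⟨j0, -, hj0⟩ := Finset.exists_mem_eq_sup Finset.univ
        (Finset.univ_nonempty (α := Fin k)) (fun j => (C j).card)
      have h1 : M ≤ (C' (Fin.castLE hkr j0)).card := by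
        rw [hM, hj0]; exact Finset.card_le_card (hext j0)
      have h2 := (abs_le.mp (hC'eq (Fin.castLE hkr j0) i)).2
      omega
    · have h1 : n / (UB - 1) ≤ n / r := Nat.div_le_div_left (by omega) hr
      have h2 : n / r ≤ (C' i).card := by
        have hball : ∀ i' : Fin r, (C' i').card ≤ (C' i).card + 1 := by
          intro i'
          have := (abs_le.mp (hC'eq i' i)).2
          omega
        have hle : n ≤ (C' i).card + (r - 1) * ((C' i).card + 1) := by
          rw [← hsum, ← Finset.add_sum_erase _ _ (Finset.mem_univ i)]
          have hs := Finset.sum_le_sum (f := fun i' => (C' i').card)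
            (g := fun _ => (C' i).card + 1)
            (fun i' (_ : i' ∈ Finset.univ.erase i) => hball i')
          simp only [Finset.sum_const, smul_eq_mul,
            Finset.card_erase_of_mem (Finset.mem_univ i), Finset.card_univ,
            Fintype.card_fin] at hs
          omega
        have hlt : n < ((C' i).card + 1) * r := by
          have heq : ((C' i).card + 1) * r
              = ((C' i).card + 1) * (r - 1) + ((C' i).card + 1) := by
            rw [← Nat.mul_succ]; congr 1; omega
          rw [heq, Nat.mul_comm]
          omega
        exact Nat.lt_succ_iff.mp ((Nat.div_lt_iff_lt_mul hr).mpr hlt)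
      omega
  -- the extra vertices
  set D : Fin k → Finset V := fun j => C' (Fin.castLE hkr j) \ C j with hD
  have hDsubU : ∀ j, D j ⊆ U := by
    intro j v hv
    rw [Finset.mem_sdiff] at hv
    rw [hU, Finset.mem_sdiff]
    refine ⟨Finset.mem_univ v, ?_⟩
    rw [Finset.mem_biUnion]
    rintro ⟨i, -, hvi⟩
    by_cases hij : i = j
    · exact hv.2 (hij ▸ hvi)
    · have hvi' : v ∈ C' (Fin.castLE hkr i) := hext i hvi
      have hne : Fin.castLE hkr i ≠ Fin.castLE hkr j := by
        intro h; exact hij (Fin.castLE_injective hkr h)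
      exact (Finset.disjoint_left.mp (hC'disj _ _ hne)) hvi' hv.1
  have hDdisj : ∀ i j : Fin k, i ≠ j → Disjoint (D i) (D j) := by
    intro i j hij
    have hne : Fin.castLE hkr i ≠ Fin.castLE hkr j := by
      intro h; exact hij (Fin.castLE_injective hkr h)
    exact Finset.disjoint_of_subset_left (Finset.sdiff_subset)
      (Finset.disjoint_of_subset_right (Finset.sdiff_subset) (hC'disj _ _ hne))
  have hsumD : ∑ j : Fin k, (D j).card ≤ U.card := by
    rw [← Finset.card_biUnion (fun i _ j _ hij => hDdisj i j hij)]
    exact Finset.card_le_card (Finset.biUnion_subset.mpr fun j _ => hDsubU j)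
  have hcardD : ∀ j : Fin k, ((D j).card : ℤ)
      = ((C' (Fin.castLE hkr j)).card : ℤ) - ((C j).card : ℤ) := by
    intro j
    rw [hD, Finset.card_sdiff_of_subset (hext j)]
    have := Finset.card_le_card (hext j)
    omega
  rw [ge_iff_le]
  calc ∑ j : Fin k, max (max ((M : ℤ) - 1) ((n / (UB - 1) : ℕ) : ℤ)
        - ((C j).card : ℤ)) 0
      ≤ ∑ j : Fin k, ((D j).card : ℤ) := by
        refine Finset.sum_le_sum fun j _ => ?_
        rw [hcardD j]
        have h1 := hlow (Fin.castLE hkr j)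
        have h2 := Finset.card_le_card (hext j)
        apply max_le <;> omega
    _ ≤ (U.card : ℤ) := by exact_mod_cast hsumD
end

section
/- Let G be a simple graph on n vertices, let UB and LB be, respectively, an upper and a lower bound of χ_eq(G), and let Π = (C_1, ..., C_k; U) be a partial k-coloring of G with k < UB, and set M = max{|C_r| : 1 ≤ r ≤ k}. If Π can be extended to an r-eqcol of G for some r with k ≤ r < UB, then M ≤ ⌈n / max{k, LB}⌉ (property P.2). -/
/-! Each class of an equitable `r`-coloring has at most `⌈n / r⌉` vertices, since its size
exceeds every other class size by at most one. The extension puts each `C_j` inside such a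
class and witnesses `χ_eq(G) ≤ r`, so `max{k, LB} ≤ r` and `⌈n / r⌉ ≤ ⌈n / max{k, LB}⌉`. -/

theorem Nat.ceilDiv_le_ceilDiv_of_le {a b : ℕ} (ha : 0 < a) (hab : a ≤ b) (n : ℕ) :
    n ⌈/⌉ b ≤ n ⌈/⌉ a := by
  rw [ceilDiv_le_iff_le_mul (ha.trans_le hab)]
  calc n ≤ a * (n ⌈/⌉ a) := by simpa using le_smul_ceilDiv (b := n) ha
    _ ≤ b * (n ⌈/⌉ a) := Nat.mul_le_mul_right _ hab

theorem le_sum_ceilDiv_card_of_le_add_one {ι : Type*} [Fintype ι] (f : ι → ℕ)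
    (hf : ∀ i j, f i ≤ f j + 1) (i : ι) :
    f i ≤ (∑ j, f j) ⌈/⌉ Fintype.card ι := by
  have hpos : 0 < Fintype.card ι := Fintype.card_pos_iff.mpr ⟨i⟩
  have hlt : ∑ _j : ι, f i < ∑ j, (f j + 1) :=
    Finset.sum_lt_sum (fun j _ => hf i j) ⟨i, Finset.mem_univ _, Nat.lt_succ_self _⟩
  simp only [Finset.sum_const, Finset.card_univ, smul_eq_mul, Finset.sum_add_distrib,
    mul_one] at hlt
  rw [Nat.ceilDiv_eq_add_pred_div, Nat.le_div_iff_mul_le hpos, mul_comm]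
  omega

namespace IsEqCol

variable {V : Type*} [Fintype V] [DecidableEq V] {G : SimpleGraph V} {r : ℕ}
  {C : Fin r → Finset V}

theorem sum_card (h : IsEqCol G C) : ∑ j, (C j).card = Fintype.card V := by
  rw [← Finset.card_univ, ← h.2.1, Finset.card_biUnion]
  exact fun i _ j _ hij => h.1.2.2 i j hij

theorem card_le_card_add_one (h : IsEqCol G C) (i j : Fin r) :
    (C i).card ≤ (C j).card + 1 := by
  have := (abs_le.mp (h.2.2 i j)).2
  omega

theorem card_le_ceilDiv (h : IsEqCol G C) (i : Fin r) :
    (C i).card ≤ Fintype.card V ⌈/⌉ r := by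
  simpa [h.sum_card] using
    le_sum_ceilDiv_card_of_le_add_one (fun j => (C j).card) h.card_le_card_add_one i

theorem eqChrom_le (h : IsEqCol G C) : eqChrom G ≤ r :=
  Nat.sInf_le ⟨C, h⟩

end IsEqCol

theorem property_P2_general {V : Type*} [Fintype V] [DecidableEq V] (G : SimpleGraph V)
    (n LB k : ℕ) (hn : n = Fintype.card V)
    (hLB : LB ≤ eqChrom G)
    (C : Fin k → Finset V)
    (M : ℕ) (hM : M = Finset.univ.sup fun j => (C j).card)
    (r : ℕ) (hkr : k ≤ r)
    (C' : Fin r → Finset V) (hC' : IsEqCol G C')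
    (hext : ∀ j : Fin k, C j ⊆ C' (Fin.castLE hkr j)) :
    M ≤ n ⌈/⌉ max k LB := by
  have hr : max k LB ≤ r := max_le hkr (hLB.trans hC'.eqChrom_le)
  subst hM hn
  refine Finset.sup_le fun j _ => ?_
  calc (C j).card ≤ (C' (Fin.castLE hkr j)).card := Finset.card_le_card (hext j)
    _ ≤ Fintype.card V ⌈/⌉ r := hC'.card_le_ceilDiv _
    _ ≤ Fintype.card V ⌈/⌉ max k LB :=
      Nat.ceilDiv_le_ceilDiv_of_le (j.pos.trans_le (le_max_left _ _)) hr _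

/-- **Property P.2.**  If a partial `k`-coloring of `G` (with `k < UB`,
`UB` and `LB` upper and lower bounds of `χ_eq(G)`, `M` the largest class size) can be
extended to an `r`-eqcol of `G` with `k ≤ r < UB`, then `M ≤ ⌈n / max{k, LB}⌉`. -/
theorem property_P2 {V : Type*} [Fintype V] [DecidableEq V] (G : SimpleGraph V)
    (n UB LB k : ℕ) (hn : n = Fintype.card V)
    (hUB : eqChrom G ≤ UB) (hLB : LB ≤ eqChrom G)
    (C : Fin k → Finset V) (hC : IsPartialColoring G C)
    (hk : 0 < k) (hkUB : k < UB)
    (M : ℕ) (hM : M = Finset.univ.sup fun j => (C j).card)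
    (U : Finset V) (hU : U = Finset.univ \ Finset.univ.biUnion C)
    (r : ℕ) (hkr : k ≤ r) (hrUB : r < UB)
    (C' : Fin r → Finset V) (hC' : IsEqCol G C')
    (hext : ∀ j : Fin k, C j ⊆ C' (Fin.castLE hkr j)) :
    M ≤ n ⌈/⌉ max k LB :=
  property_P2_general G n LB k hn hLB C M hM r hkr C' hC' hext
end

section
/- Let G be a simple graph on n vertices, let UB be an upper bound of χ_eq(G), and let Π = (C_1, ..., C_k; U) be a partial k-coloring of G with k < UB and U = ∅, and set M = max{|C_r| : 1 ≤ r ≤ k}. If Π satisfies property P.1, i.e. |U| ≥ Σ_{j=1}^{k} (max{M − 1, ⌊n/(UB − 1)⌋} − |C_j|)^+, then the partition C_1, ..., C_k is an equitable k-coloring (k-eqcol) of G. -/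
/-- If a partial `k`-coloring of `G` with `k < UB` (`UB` an upper bound
of `χ_eq(G)`) has no uncolored vertices (`U = ∅`) and satisfies property P.1,
i.e. `|U| ≥ Σ_{j=1}^{k} (max{M − 1, ⌊n/(UB − 1)⌋} − |C_j|)⁺`, then `C₁, …, C_k` is an
equitable `k`-coloring of `G`. -/
theorem P1_with_no_uncolored_gives_eqcol {V : Type*} [Fintype V] [DecidableEq V]
    (G : SimpleGraph V)
    (n UB k : ℕ) (hn : n = Fintype.card V)
    (hUB : eqChrom G ≤ UB)
    (C : Fin k → Finset V) (hC : IsPartialColoring G C)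
    (hk : 0 < k) (hkUB : k < UB)
    (M : ℕ) (hM : M = Finset.univ.sup fun j => (C j).card)
    (U : Finset V) (hU : U = Finset.univ \ Finset.univ.biUnion C)
    (hUempty : U = ∅)
    (hP1 : (U.card : ℤ) ≥ ∑ j : Fin k, max (max ((M : ℤ) - 1) ((n / (UB - 1) : ℕ) : ℤ)
      - ((C j).card : ℤ)) 0) :
    IsEqCol G C := by
  have hcover : Finset.univ.biUnion C = Finset.univ := by
    rw [hUempty] at hU
    have := hU.symm
    rw [Finset.sdiff_eq_empty_iff_subset] at this
    exact le_antisymm (Finset.subset_univ _) this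
  refine ⟨hC, hcover, ?_⟩
  -- each summand is nonneg, and the sum is ≤ 0
  have hsum : ∑ j : Fin k, max (max ((M : ℤ) - 1) ((n / (UB - 1) : ℕ) : ℤ)
      - ((C j).card : ℤ)) 0 ≤ 0 := by
    simpa [hUempty] using hP1
  have hterm : ∀ j : Fin k, max (max ((M : ℤ) - 1) ((n / (UB - 1) : ℕ) : ℤ)
      - ((C j).card : ℤ)) 0 = 0 := by
    intro j
    have hnonneg : ∀ i ∈ Finset.univ, (0:ℤ) ≤ max (max ((M : ℤ) - 1)
        ((n / (UB - 1) : ℕ) : ℤ) - ((C i).card : ℤ)) 0 := fun i _ => le_max_right _ _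
    have := (Finset.sum_eq_zero_iff_of_nonneg hnonneg).mp
      (le_antisymm hsum (Finset.sum_nonneg hnonneg)) j (Finset.mem_univ j)
    exact this
  have hlb : ∀ j : Fin k, (M : ℤ) - 1 ≤ ((C j).card : ℤ) := by
    intro j
    have := hterm j
    have h1 : max ((M : ℤ) - 1) ((n / (UB - 1) : ℕ) : ℤ) - ((C j).card : ℤ) ≤ 0 := by
      by_contra h
      push_neg at h
      rw [max_eq_left h.le] at this
      omega
    have := le_max_left ((M : ℤ) - 1) ((n / (UB - 1) : ℕ) : ℤ)
    omega
  have hub : ∀ j : Fin k, ((C j).card : ℤ) ≤ (M : ℤ) := by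
    intro j
    exact_mod_cast hM ▸ Finset.le_sup (Finset.mem_univ j)
  intro i j
  have := hlb i; have := hlb j; have := hub i; have := hub j
  rw [abs_le]
  omega
end
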